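/- arXiv:2509.13040 — 3 statements merged into one kernel-verified Lean document; each statement's English description precedes it below -/
import Mathlib

section
/- Let G be a Tanner graph with a rooted tree decomposition, and let t be a join node with children t1 and t2 (B_t = B_{t1} = B_{t2}). Suppose S_{t1} is a trapping set with parameters (R_{t1},Q) in G_{t1} and S_{t2} is a trapping set with parameters (R_{t2},Q) in G_{t2}. Then S := S_{t1} ∪ S_{t2} is a trapping set with parameters (R,Q) in G_t, where R = R_{t1} ⊕ R_{t2} ⊕ Γ_o(G_t[Q ∪ B_t^c]). -/
/-!
Below a join node the two children's subtrees share only the bag `B_t`: the bags containing a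
vertex form a subtree, and a subtree meeting both sides must pass through `t`. So `G_t` is glued
from `G_{t1}` and `G_{t2}` along the separator `B_t`, with no edge between the two sides outside
it, and `S1 ∩ S2 = Q`. A check node off `B_t` sees the other side's set only through `Q`, which
both sets contain, so its parity is that of its own side; a check node in `B_t` gets its parity
from inclusion–exclusion `|N ∩ (S1 ∪ S2)| = |N ∩ S1| + |N ∩ S2| - |N ∩ Q|`.
-/

/-- A Tanner graph: a bipartite graph on vertex set `V` partitioned into
variable nodes `L` and check nodes `R`, every edge joining `L` and `R`. -/
structure TannerGraph (V : Type*) where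
  G : SimpleGraph V
  L : Set V
  R : Set V
  disj : Disjoint L R
  cover : L ∪ R = Set.univ
  bipartite : ∀ ⦃u v⦄, G.Adj u v → (u ∈ L ∧ v ∈ R) ∨ (u ∈ R ∧ v ∈ L)

/-- `Γ_o(G[S])`: check nodes having an odd number of neighbours in `S`. -/
def TannerGraph.Gamma {V : Type*} (TG : TannerGraph V) (S : Set V) : Set V :=
  {c | c ∈ TG.R ∧ Odd ((TG.G.neighborSet c ∩ S).ncard)}

/-- A rooted tree decomposition of the graph `G`: `T` is a finite tree with
root `root` and bags `B i ⊆ V` covering all vertices and edges, such that for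
every vertex the set of bags containing it induces a connected subgraph of `T`. -/
structure IsRootedTreeDecomp {V ι : Type*} (G : SimpleGraph V)
    (T : SimpleGraph ι) (root : ι) (B : ι → Set V) : Prop where
  isTree : T.IsTree
  covers : ∀ v, ∃ i, v ∈ B i
  coversEdge : ∀ ⦃u v⦄, G.Adj u v → ∃ i, u ∈ B i ∧ v ∈ B i
  connBags : ∀ v, (T.induce {i | v ∈ B i}).Connected

/-- `Desc T root t i`: `i` is a descendant of `t` in the tree `T` rooted at
`root`, i.e. `t` lies on a path from the root to `i` (`t` itself included). -/
def Desc {ι : Type*} (T : SimpleGraph ι) (root : ι) (t i : ι) : Prop :=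
  ∃ p : T.Walk root i, p.IsPath ∧ t ∈ p.support

/-- `IsChildOf T root s t`: `s` is a child of `t` in the rooted tree. -/
def IsChildOf {ι : Type*} (T : SimpleGraph ι) (root : ι) (s t : ι) : Prop :=
  T.Adj t s ∧ Desc T root t s

/-- `∪_{i ∈ T_t} B_i`: union of the bags over all descendants of `t`;
this is the vertex set of the induced subgraph `G_t`. -/
def subVerts {V ι : Type*} (T : SimpleGraph ι) (root : ι) (B : ι → Set V)
    (t : ι) : Set V :=
  {v | ∃ i, Desc T root t i ∧ v ∈ B i}

/-- `Γ_o(G_t[S])`, where `W` is the vertex set of `G_t`: check nodes of `G_t`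
having an odd number of `G_t`-neighbours in `S`. -/
def GammaLoc {V : Type*} (TG : TannerGraph V) (W S : Set V) : Set V :=
  {c | c ∈ TG.R ∧ c ∈ W ∧ Odd ((TG.G.neighborSet c ∩ W ∩ S).ncard)}

/-- `S` is a trapping set with parameters `(R', Q)` in `G_t`, where `W` is the
vertex set of `G_t` and `Bt` is the bag at `t`. -/
def HasParams {V : Type*} (TG : TannerGraph V) (W Bt S R' Q : Set V) : Prop :=
  S.Nonempty ∧ S ⊆ W ∩ TG.L ∧ S ∩ (Bt ∩ TG.L) = Q ∧ GammaLoc TG W S = R'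

/-- `S` is a trapping set with extended parameters `(I, Q, d)` in `G_t`. -/
def HasExtParams {V : Type*} (TG : TannerGraph V) (W Bt S I Q : Set V)
    (d : ℕ) : Prop :=
  S.Nonempty ∧ S ⊆ W ∩ TG.L ∧ S ∩ (Bt ∩ TG.L) = Q ∧
    GammaLoc TG W S ∩ (Bt ∩ TG.R) = I ∧ (GammaLoc TG W S \ (Bt ∩ TG.R)).ncard = d

/-- `Γ_o(G_t[Q ∪ B_t^c]) = {c ∈ B_t^c : |N_{G_t}(c) ∩ Q| is odd}`. -/
def GammaBag {V : Type*} (TG : TannerGraph V) (W Bt Q : Set V) : Set V :=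
  {c | c ∈ Bt ∩ TG.R ∧ Odd ((TG.G.neighborSet c ∩ W ∩ Q).ncard)}

open SimpleGraph

section RootedTree

variable {ι : Type*} {T : SimpleGraph ι} {root : ι}

lemma Desc.mem_support_of_isPath (hA : T.IsAcyclic) {t i : ι} (hd : Desc T root t i)
    {p : T.Walk root i} (hp : p.IsPath) : t ∈ p.support := by
  obtain ⟨q, hq, ht⟩ := hd
  have : (⟨p, hp⟩ : T.Path root i) = ⟨q, hq⟩ := (hA.subsingleton_path root i).elim _ _
  rwa [show p = q from congrArg Subtype.val this]

lemma Desc.refl (hC : T.Connected) (t : ι) : Desc T root t t := by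
  obtain ⟨p, hp⟩ := hC.exists_isPath root t
  exact ⟨p, hp, p.end_mem_support⟩

lemma Desc.trans (hA : T.IsAcyclic) {t s i : ι} (hts : Desc T root t s)
    (hsi : Desc T root s i) : Desc T root t i := by
  classical
  obtain ⟨p, hp, hs⟩ := hsi
  exact ⟨p, hp, p.support_takeUntil_subset_support hs
    (hts.mem_support_of_isPath hA (hp.takeUntil hs))⟩

lemma Desc.exists_isChildOf {t i : ι} (hd : Desc T root t i) (hti : t ≠ i) :
    ∃ s, IsChildOf T root s t ∧ Desc T root s i := by
  classical
  obtain ⟨p, hp, ht⟩ := hd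
  obtain ⟨s, hadj, q, hq⟩ := Walk.exists_eq_cons_of_ne hti (p.dropUntil t ht)
  have hsplit : p = ((p.takeUntil t ht).concat hadj).append q := by
    rw [Walk.concat_append, ← hq, Walk.take_spec]
  have hpath : ((p.takeUntil t ht).concat hadj).IsPath := (hsplit ▸ hp).of_append_left
  refine ⟨s, ⟨hadj, _, hpath, ?_⟩, p, hp, ?_⟩
  · simp [Walk.support_concat]
  · rw [hsplit, Walk.mem_support_append_iff]
    simp [Walk.support_concat]

lemma IsChildOf.dart_mem_darts (hA : T.IsAcyclic) {s t k : ι} (hc : IsChildOf T root s t)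
    {p : T.Walk root k} (hp : p.IsPath) (hs : s ∈ p.support) : ⟨(t, s), hc.1⟩ ∈ p.darts := by
  classical
  have hq := hp.takeUntil hs
  have ht := hc.2.mem_support_of_isPath hA hq
  have hedge : (p.takeUntil s hs).dropUntil t ht = Walk.cons hc.1 Walk.nil :=
    congrArg Subtype.val <|
      (hA.subsingleton_path t s).elim ⟨_, hq.dropUntil ht⟩ (Path.singleton hc.1)
  apply p.darts_takeUntil_subset_darts hs
  apply (p.takeUntil s hs).darts_dropUntil_subset_darts ht
  simp [hedge]

/-- The tree edges from `t` to its children `t₁`, `t₂` would both leave `t` along the path from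
the root to a common descendant, and a path leaves each vertex at most once. -/
lemma IsChildOf.not_desc_of_desc (hA : T.IsAcyclic) {t t₁ t₂ k : ι}
    (hc₁ : IsChildOf T root t₁ t) (hc₂ : IsChildOf T root t₂ t) (hne : t₁ ≠ t₂)
    (h₁ : Desc T root t₁ k) : ¬ Desc T root t₂ k := by
  intro h₂
  obtain ⟨p, hp, hm₁⟩ := h₁
  have hfst : (p.darts.map (·.fst)).Nodup := by
    rw [Walk.map_fst_darts]
    exact hp.support_nodup.sublist (List.dropLast_sublist _)
  have := List.inj_on_of_nodup_map hfst (hc₁.dart_mem_darts hA hp hm₁)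
    (hc₂.dart_mem_darts hA hp (h₂.mem_support_of_isPath hA hp)) rfl
  exact hne (congrArg (fun d : T.Dart => d.snd) this)

end RootedTree

section TreeDecomposition

variable {V ι : Type*} {T : SimpleGraph ι} {root : ι} {B : ι → Set V}

/-- Go from the root to `k`, then from `k` to `j` through bags containing `c`; since `x` is an
ancestor of `j`, it lies on this route. -/
lemma IsRootedTreeDecomp.desc_or_mem_of_mem {G : SimpleGraph V}
    (hD : IsRootedTreeDecomp G T root B) {c : V} {j k x : ι} (hj : c ∈ B j) (hk : c ∈ B k)
    (hx : Desc T root x j) : Desc T root x k ∨ c ∈ B x := by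
  classical
  obtain ⟨w'⟩ := (hD.connBags c).preconnected ⟨k, hk⟩ ⟨j, hj⟩
  obtain ⟨w, hw⟩ : ∃ w : T.Walk k j, ∀ y ∈ w.support, c ∈ B y := by
    refine ⟨w'.map (Embedding.induce (G := T) {i | c ∈ B i}).toHom, fun y hy => ?_⟩
    obtain ⟨⟨z, hz⟩, _, rfl⟩ := List.mem_map.mp ((Walk.support_map _ w') ▸ hy)
    exact hz
  obtain ⟨p, hp⟩ := hD.isTree.connected.exists_isPath root k
  have hmem := (p.append w).support_bypass_subset_support
    (hx.mem_support_of_isPath hD.isTree.isAcyclic (p.append w).bypass_isPath)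
  rw [Walk.mem_support_append_iff] at hmem
  exact hmem.imp (fun h => ⟨p, hp, h⟩) (hw x)

lemma subVerts_mono (hA : T.IsAcyclic) {s t : ι} (h : Desc T root t s) :
    subVerts T root B s ⊆ subVerts T root B t :=
  fun _ ⟨i, hi, hv⟩ => ⟨i, h.trans hA hi, hv⟩

lemma bag_subset_subVerts (hC : T.Connected) (t : ι) : B t ⊆ subVerts T root B t :=
  fun _ hv => ⟨t, Desc.refl hC t, hv⟩

lemma subVerts_subset_bag_union {t t₁ t₂ : ι}
    (honly : ∀ s, IsChildOf T root s t → s = t₁ ∨ s = t₂) :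
    subVerts T root B t ⊆ B t ∪ subVerts T root B t₁ ∪ subVerts T root B t₂ := by
  rintro v ⟨i, hi, hv⟩
  by_cases hti : t = i
  · exact Or.inl (Or.inl (hti ▸ hv))
  obtain ⟨s, hs, hsi⟩ := hi.exists_isChildOf hti
  rcases honly s hs with rfl | rfl
  · exact Or.inl (Or.inr ⟨i, hsi, hv⟩)
  · exact Or.inr ⟨i, hsi, hv⟩

variable {G : SimpleGraph V} (hD : IsRootedTreeDecomp G T root B) {t t₁ t₂ : ι}
  (hc₁ : IsChildOf T root t₁ t) (hc₂ : IsChildOf T root t₂ t) (hne : t₁ ≠ t₂)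
include hD hc₁ hc₂ hne

lemma IsRootedTreeDecomp.subVerts_inter_subVerts_subset :
    subVerts T root B t₁ ∩ subVerts T root B t₂ ⊆ B t₁ := by
  rintro v ⟨⟨j, hj, hvj⟩, ⟨m, hm, hvm⟩⟩
  exact (hD.desc_or_mem_of_mem hvj hvm hj).resolve_left
    fun h => hc₁.not_desc_of_desc hD.isTree.isAcyclic hc₂ hne h hm

lemma IsRootedTreeDecomp.mem_bag_of_adj {u v : V} (hu : u ∈ subVerts T root B t₁)
    (hv : v ∈ subVerts T root B t₂) (huv : G.Adj u v) : u ∈ B t₁ ∨ v ∈ B t₂ := by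
  obtain ⟨j, hj, huj⟩ := hu
  obtain ⟨m, hm, hvm⟩ := hv
  obtain ⟨k, huk, hvk⟩ := hD.coversEdge huv
  rcases hD.desc_or_mem_of_mem huj huk hj with hk₁ | hu₁
  · rcases hD.desc_or_mem_of_mem hvm hvk hm with hk₂ | hv₂
    · exact (hc₁.not_desc_of_desc hD.isTree.isAcyclic hc₂ hne hk₁ hk₂).elim
    · exact Or.inr hv₂
  · exact Or.inl hu₁

end TreeDecomposition

section TannerGraph

variable {V : Type*}

lemma neighborSet_inter_eq_of_separated {G : SimpleGraph V} {W₁ W₂ X S Q : Set V}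
    (hedge : ∀ u ∈ W₁, ∀ v ∈ W₂, G.Adj u v → u ∈ X ∨ v ∈ X) (hS : S ⊆ W₂) (hQ : S ∩ X = Q)
    {c : V} (hc : c ∈ W₁) (hcX : c ∉ X) : G.neighborSet c ∩ S = G.neighborSet c ∩ Q := by
  subst hQ
  ext v
  refine ⟨fun ⟨hcv, hvS⟩ => ⟨hcv, hvS, ?_⟩, fun ⟨hcv, hvS, _⟩ => ⟨hcv, hvS⟩⟩
  exact (hedge c hc v (hS hvS) hcv).resolve_left hcX

variable {TG : TannerGraph V}

lemma mem_gammaLoc_of_subset {W S : Set V} (hS : S ⊆ W) {c : V} :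
    c ∈ GammaLoc TG W S ↔ c ∈ TG.R ∧ c ∈ W ∧ Odd (TG.G.neighborSet c ∩ S).ncard := by
  rw [GammaLoc, Set.mem_ofPred_eq, Set.inter_assoc, Set.inter_eq_right.mpr hS]

lemma mem_gammaBag_of_subset {W X Q : Set V} (hQ : Q ⊆ W) {c : V} :
    c ∈ GammaBag TG W X Q ↔ c ∈ X ∧ c ∈ TG.R ∧ Odd (TG.G.neighborSet c ∩ Q).ncard := by
  rw [GammaBag, Set.mem_ofPred_eq, Set.inter_assoc, Set.inter_eq_right.mpr hQ, Set.mem_inter_iff,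
    and_assoc]

theorem gammaLoc_union_of_separated [Finite V] {W₁ W₂ X S₁ S₂ Q : Set V} (hX : W₁ ∩ W₂ = X)
    (hedge : ∀ u ∈ W₁, ∀ v ∈ W₂, TG.G.Adj u v → u ∈ X ∨ v ∈ X)
    (hS₁ : S₁ ⊆ W₁) (hS₂ : S₂ ⊆ W₂) (hQ₁ : S₁ ∩ X = Q) (hQ₂ : S₂ ∩ X = Q) :
    GammaLoc TG (W₁ ∪ W₂) (S₁ ∪ S₂) =
      symmDiff (symmDiff (GammaLoc TG W₁ S₁) (GammaLoc TG W₂ S₂)) (GammaBag TG (W₁ ∪ W₂) X Q) := by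
  have hQS : S₁ ∩ S₂ = Q := by
    refine subset_antisymm (fun v hv => hQ₁ ▸ ⟨hv.1, hX ▸ ⟨hS₁ hv.1, hS₂ hv.2⟩⟩) ?_
    exact Set.subset_inter (hQ₁ ▸ Set.inter_subset_left) (hQ₂ ▸ Set.inter_subset_left)
  ext c
  rw [mem_gammaLoc_of_subset (Set.union_subset_union hS₁ hS₂), Set.mem_symmDiff,
    Set.mem_symmDiff, mem_gammaLoc_of_subset hS₁, mem_gammaLoc_of_subset hS₂,
    mem_gammaBag_of_subset (hQ₁ ▸ Set.inter_subset_left.trans (hS₁.trans Set.subset_union_left))]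
  set N := TG.G.neighborSet c
  have hcount := Set.ncard_union_add_ncard_inter (N ∩ S₁) (N ∩ S₂)
  rw [← Set.inter_union_distrib_left, ← Set.inter_inter_distrib_left, hQS] at hcount
  have hW₁ : c ∈ W₁ → c ∉ X → (N ∩ S₂).ncard = (N ∩ Q).ncard := fun hc hcX => by
    rw [neighborSet_inter_eq_of_separated hedge hS₂ hQ₂ hc hcX]
  have hW₂ : c ∈ W₂ → c ∉ X → (N ∩ S₁).ncard = (N ∩ Q).ncard := fun hc hcX => by
    rw [neighborSet_inter_eq_of_separated (fun u hu v hv huv => (hedge v hv u hu huv.symm).symm)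
      hS₁ hQ₁ hc hcX]
  have hcX : c ∈ X ↔ c ∈ W₁ ∧ c ∈ W₂ := by rw [← hX]; rfl
  rw [hcX, Set.mem_union]
  by_cases hR : c ∈ TG.R
  swap
  · simp [hR]
  simp only [hR, true_and, Nat.odd_iff]
  by_cases hc₁ : c ∈ W₁ <;> by_cases hc₂ : c ∈ W₂ <;>
    simp only [hc₁, hc₂, or_true, or_false, false_or, true_and, and_true, and_false,
      false_and, not_false_eq_true, and_self, iff_self]
  · omega
  · have := hW₁ hc₁ (by simp [hcX, hc₂])
    omega
  · have := hW₂ hc₂ (by simp [hcX, hc₁])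
    omega

theorem HasParams.union_of_separated [Finite V] {W₁ W₂ X S₁ S₂ R₁ R₂ Q : Set V}
    (hX : W₁ ∩ W₂ = X) (hedge : ∀ u ∈ W₁, ∀ v ∈ W₂, TG.G.Adj u v → u ∈ X ∨ v ∈ X)
    (h₁ : HasParams TG W₁ X S₁ R₁ Q) (h₂ : HasParams TG W₂ X S₂ R₂ Q) :
    HasParams TG (W₁ ∪ W₂) X (S₁ ∪ S₂)
      (symmDiff (symmDiff R₁ R₂) (GammaBag TG (W₁ ∪ W₂) X Q)) Q := by
  obtain ⟨hne, hS₁, hQ₁, rfl⟩ := h₁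
  obtain ⟨-, hS₂, hQ₂, rfl⟩ := h₂
  have inter_bag {W S : Set V} (hS : S ⊆ W ∩ TG.L) : S ∩ (X ∩ TG.L) = S ∩ X :=
    Set.ext fun v => ⟨fun h => ⟨h.1, h.2.1⟩, fun h => ⟨h.1, h.2, (hS h.1).2⟩⟩
  refine ⟨hne.inl, ?_, ?_, ?_⟩
  · rw [Set.union_inter_distrib_right]
    exact Set.union_subset_union hS₁ hS₂
  · rw [Set.union_inter_distrib_right, hQ₁, hQ₂, Set.union_self]
  · exact gammaLoc_union_of_separated hX hedge (hS₁.trans Set.inter_subset_left)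
      (hS₂.trans Set.inter_subset_left) (inter_bag hS₁ ▸ hQ₁) (inter_bag hS₂ ▸ hQ₂)

end TannerGraph

theorem stmt_7_general {V ι : Type*} [Fintype V]
    (TG : TannerGraph V) (T : SimpleGraph ι) (root : ι) (B : ι → Set V)
    (hD : IsRootedTreeDecomp TG.G T root B)
    (t t1 t2 : ι)
    (hc1 : IsChildOf T root t1 t) (hc2 : IsChildOf T root t2 t) (hne : t1 ≠ t2)
    (honly : ∀ s, IsChildOf T root s t → s = t1 ∨ s = t2)
    (hB1 : B t = B t1) (hB2 : B t = B t2)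
    (S1 S2 R1 R2 Q : Set V)
    (h1 : HasParams TG (subVerts T root B t1) (B t1) S1 R1 Q)
    (h2 : HasParams TG (subVerts T root B t2) (B t2) S2 R2 Q) :
    HasParams TG (subVerts T root B t) (B t) (S1 ∪ S2)
      (symmDiff (symmDiff R1 R2) (GammaBag TG (subVerts T root B t) (B t) Q)) Q := by
  have hA := hD.isTree.isAcyclic
  have hC := hD.isTree.connected
  have hW : subVerts T root B t = subVerts T root B t1 ∪ subVerts T root B t2 := by
    refine subset_antisymm ?_ (Set.union_subset (subVerts_mono hA hc1.2) (subVerts_mono hA hc2.2))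
    have hBt : B t ⊆ subVerts T root B t1 := hB1 ▸ bag_subset_subVerts hC t1
    simpa only [Set.union_eq_right.mpr hBt] using subVerts_subset_bag_union (B := B) honly
  have hX : subVerts T root B t1 ∩ subVerts T root B t2 = B t :=
    subset_antisymm (hB1 ▸ hD.subVerts_inter_subVerts_subset hc1 hc2 hne)
      (Set.subset_inter (hB1 ▸ bag_subset_subVerts hC t1) (hB2 ▸ bag_subset_subVerts hC t2))
  rw [← hB1] at h1
  rw [← hB2] at h2
  rw [hW]
  exact h1.union_of_separated hX (fun u hu v hv huv =>
    (hD.mem_bag_of_adj hc1 hc2 hne hu hv huv).imp (hB1 ▸ ·) (hB2 ▸ ·)) h2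

/-- join-node combination rule for trapping-set parameters. -/
theorem stmt_7 {V ι : Type*} [Fintype V] [Fintype ι]
    (TG : TannerGraph V) (T : SimpleGraph ι) (root : ι) (B : ι → Set V)
    (hD : IsRootedTreeDecomp TG.G T root B)
    (t t1 t2 : ι)
    (hc1 : IsChildOf T root t1 t) (hc2 : IsChildOf T root t2 t) (hne : t1 ≠ t2)
    (honly : ∀ s, IsChildOf T root s t → s = t1 ∨ s = t2)
    (hB1 : B t = B t1) (hB2 : B t = B t2)
    (S1 S2 R1 R2 Q : Set V)
    (h1 : HasParams TG (subVerts T root B t1) (B t1) S1 R1 Q)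
    (h2 : HasParams TG (subVerts T root B t2) (B t2) S2 R2 Q) :
    HasParams TG (subVerts T root B t) (B t) (S1 ∪ S2)
      (symmDiff (symmDiff R1 R2) (GammaBag TG (subVerts T root B t) (B t) Q)) Q :=
  stmt_7_general TG T root B hD t t1 t2 hc1 hc2 hne honly hB1 hB2 S1 S2 R1 R2 Q h1 h2
end

section
/- Let G be a Tanner graph with a rooted tree decomposition, and let t be an introduce node with single child t' introducing a variable node v, i.e. B_t = B_{t'} ∪ {v} with v ∈ L and v ∉ B_{t'}. Then for every R' ⊆ B_t^c and Q ⊆ B_t^v with v ∉ Q, a set S is a trapping set with parameters (R',Q) in G_t if and only if S is a trapping set with parameters (R',Q) in G_{t'}. -/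
open SimpleGraph

section Aux
variable {ι : Type*} {T : SimpleGraph ι} {root : ι}

lemma path_unique (hT : T.IsTree) {a b : ι} (p q : T.Walk a b)
    (hp : p.IsPath) (hq : q.IsPath) : p = q :=
  (hT.existsUnique_path a b).unique hp hq

lemma desc_self (hT : T.IsTree) (t : ι) : Desc T root t t := by
  classical
  obtain ⟨w⟩ := hT.isConnected.preconnected root t
  exact ⟨w.bypass, w.bypass_isPath, Walk.end_mem_support _⟩

/-- Lemma A: descendants of a child are descendants of the parent. -/
lemma desc_of_child (hT : T.IsTree) {t t' i : ι} (hchild : IsChildOf T root t' t)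
    (h : Desc T root t' i) : Desc T root t i := by
  classical
  obtain ⟨p, hp, ht'⟩ := h
  obtain ⟨r, hr, htr⟩ := hchild.2
  refine ⟨p, hp, ?_⟩
  have heq : p.takeUntil t' ht' = r := path_unique hT _ _ (hp.takeUntil ht') hr
  have : t ∈ (p.takeUntil t' ht').support := heq ▸ htr
  exact Walk.support_takeUntil_subset p ht' this

/-- `t'` is not on any path from the root to its parent `t`. -/
lemma child_not_on_root_path (hT : T.IsTree) {t t' : ι}
    (hchild : IsChildOf T root t' t) {p : T.Walk root t} (hp : p.IsPath) :
    t' ∉ p.support := by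
  classical
  intro hmem
  obtain ⟨r, hr, htr⟩ := hchild.2
  have heq : r.takeUntil t htr = p := path_unique hT _ _ (hr.takeUntil htr) hp
  have h1 : t' ∈ (r.takeUntil t htr).support := heq ▸ hmem
  have hnodup := hr.support_nodup
  rw [← Walk.take_spec r htr, Walk.support_append] at hnodup
  have hdisj := List.disjoint_of_nodup_append hnodup
  have hne : t ≠ t' := (hchild.1).ne
  have h2 : t' ∈ (r.dropUntil t htr).support.tail := by
    have : t' ∈ (r.dropUntil t htr).support := Walk.end_mem_support _
    rw [Walk.support_eq_cons] at this
    rcases List.mem_cons.mp this with h | h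
    · exact absurd h.symm hne
    · exact h
  exact hdisj h1 h2

end Aux

section Aux2
variable {V ι : Type*} {T : SimpleGraph ι} {root : ι}

/-- From bag connectivity: a path between two bags containing `v`, all of whose
vertices' bags contain `v`. -/
lemma exists_bag_path {G : SimpleGraph V} {B : ι → Set V}
    (hD : IsRootedTreeDecomp G T root B) {v : V} {a b : ι}
    (ha : v ∈ B a) (hb : v ∈ B b) :
    ∃ p : T.Walk a b, p.IsPath ∧ ∀ j ∈ p.support, v ∈ B j := by
  classical
  have hconn := hD.connBags v
  obtain ⟨w⟩ := hconn.preconnected ⟨a, ha⟩ ⟨b, hb⟩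
  let f : T.induce {i | v ∈ B i} →g T := ⟨Subtype.val, fun h => h⟩
  refine ⟨(w.map f).bypass, Walk.bypass_isPath _, fun j hj => ?_⟩
  have := Walk.support_bypass_subset _ hj
  rw [Walk.support_map] at this
  obtain ⟨⟨k, hk⟩, _, rfl⟩ := List.mem_map.mp this
  exact hk

/-- Lemma B: the introduced node does not occur in the child's subtree bags. -/
lemma intro_not_mem_subVerts {G : SimpleGraph V} {B : ι → Set V}
    (hD : IsRootedTreeDecomp G T root B) {t t' : ι}
    (hchild : IsChildOf T root t' t) {v : V}
    (hvB : v ∉ B t') (hvt : v ∈ B t) :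
    v ∉ subVerts T root B t' := by
  classical
  rintro ⟨i, hdi, hvi⟩
  have hT := hD.isTree
  obtain ⟨q, hq, hqb⟩ := exists_bag_path hD hvi hvt
  have ht'q : t' ∉ q.support := fun h => hvB (hqb t' h)
  obtain ⟨P, hP, ht'P⟩ := hdi
  obtain ⟨r, hr, htr⟩ := hchild.2
  set Pt := r.takeUntil t htr with hPt
  have hPtpath : Pt.IsPath := hr.takeUntil htr
  have ht'Pt : t' ∉ Pt.support := child_not_on_root_path hT hchild hPtpath
  -- the walk root → t → i
  have heq : (Pt.append q.reverse).bypass = P :=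
    path_unique hT _ _ (Walk.bypass_isPath _) hP
  have : t' ∈ (Pt.append q.reverse).support := by
    rw [← heq] at ht'P
    exact Walk.support_bypass_subset _ ht'P
  rcases (Walk.mem_support_append_iff _ _).mp this with h | h
  · exact ht'Pt h
  · rw [Walk.support_reverse] at h
    exact ht'q (List.mem_reverse.mp h)

/-- Lemma C: a descendant of `t` is `t` itself or a descendant of the only child. -/
lemma desc_cases {t t' i : ι} (_hT : T.IsTree)
    (_hchild : IsChildOf T root t' t)
    (honly : ∀ s, IsChildOf T root s t → s = t')
    (h : Desc T root t i) : i = t ∨ Desc T root t' i := by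
  classical
  by_cases hit : i = t
  · exact Or.inl hit
  right
  obtain ⟨P, hP, htP⟩ := h
  have hD : (P.dropUntil t htP).IsPath := hP.dropUntil htP
  have hne : t ≠ i := fun h => hit h.symm
  obtain ⟨s, hadj, rest, hdrop⟩ := Walk.exists_eq_cons_of_ne hne (P.dropUntil t htP)
  -- s is not on the prefix root → t
  have hnodup := hP.support_nodup
  rw [← Walk.take_spec P htP, Walk.support_append] at hnodup
  have hdisj := List.disjoint_of_nodup_append hnodup
  have hs_tail : s ∈ (P.dropUntil t htP).support.tail := by
    rw [hdrop, Walk.support_cons]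
    exact Walk.start_mem_support rest
  have hs_not : s ∉ (P.takeUntil t htP).support := fun h => hdisj h hs_tail
  -- build a path root → s through t
  have hp2 : (Walk.cons hadj.symm (P.takeUntil t htP).reverse).IsPath := by
    rw [Walk.cons_isPath_iff]
    refine ⟨(hP.takeUntil htP).reverse, ?_⟩
    rw [Walk.support_reverse]
    exact fun h => hs_not (List.mem_reverse.mp h)
  have hdesc_s : Desc T root t s := by
    refine ⟨(Walk.cons hadj.symm (P.takeUntil t htP).reverse).reverse, hp2.reverse, ?_⟩
    rw [Walk.support_reverse]
    apply List.mem_reverse.mpr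
    rw [Walk.support_cons]
    apply List.mem_cons_of_mem
    rw [Walk.support_reverse]
    exact List.mem_reverse.mpr (Walk.end_mem_support _)
  have hst' : s = t' := honly s ⟨hadj, hdesc_s⟩
  refine ⟨P, hP, ?_⟩
  have : s ∈ (P.dropUntil t htP).support := by
    rw [hdrop, Walk.support_cons]; exact List.mem_cons_of_mem _ (Walk.start_mem_support rest)
  exact hst' ▸ Walk.support_dropUntil_subset P htP this

end Aux2

/-- introduce-variable-node rule, case `v ∉ Q`. -/
theorem stmt_9 {V ι : Type*} [Fintype V] [Fintype ι]
    (TG : TannerGraph V) (T : SimpleGraph ι) (root : ι) (B : ι → Set V)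
    (hD : IsRootedTreeDecomp TG.G T root B)
    (t t' : ι) (hchild : IsChildOf T root t' t)
    (honly : ∀ s, IsChildOf T root s t → s = t')
    (v : V) (hvL : v ∈ TG.L) (hvB : v ∉ B t') (hBt : B t = B t' ∪ {v})
    (R' Q : Set V) (hR' : R' ⊆ B t ∩ TG.R) (hQ : Q ⊆ B t ∩ TG.L) (hvQ : v ∉ Q)
    (S : Set V) :
    HasParams TG (subVerts T root B t) (B t) S R' Q ↔
      HasParams TG (subVerts T root B t') (B t') S R' Q := by
  have hT := hD.isTree
  set W' := subVerts T root B t' with hW'def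
  set W := subVerts T root B t with hWdef
  have hW'W : W' ⊆ W := by
    rintro x ⟨i, hd, hx⟩
    exact ⟨i, desc_of_child hT hchild hd, hx⟩
  have hvBt : v ∈ B t := by rw [hBt]; exact Or.inr rfl
  have hvW' : v ∉ W' := intro_not_mem_subVerts hD hchild hvB hvBt
  have hWsub : W ⊆ W' ∪ {v} := by
    rintro x ⟨i, hd, hx⟩
    rcases desc_cases hT hchild honly hd with rfl | hd'
    · rw [hBt] at hx
      rcases hx with hx | hx
      · exact Or.inl ⟨t', desc_self hT t', hx⟩
      · exact Or.inr hx
    · exact Or.inl ⟨i, hd', hx⟩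
  have hvR : v ∉ TG.R := fun h => Set.disjoint_left.mp TG.disj hvL h
  have keyW : ∀ x, x ≠ v → (x ∈ W ↔ x ∈ W') := by
    intro x hx
    constructor
    · intro h
      rcases hWsub h with h | h
      · exact h
      · exact absurd h hx
    · exact fun h => hW'W h
  have keyGamma : ∀ S : Set V, v ∉ S → GammaLoc TG W S = GammaLoc TG W' S := by
    intro S hvS
    have hNS : ∀ c, TG.G.neighborSet c ∩ W ∩ S = TG.G.neighborSet c ∩ W' ∩ S := by
      intro c
      ext x
      simp only [Set.mem_inter_iff, and_congr_left_iff]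
      intro hxS
      have hxv : x ≠ v := fun h => hvS (h ▸ hxS)
      exact and_congr_right fun _ => keyW x hxv
    ext c
    simp only [GammaLoc, Set.mem_setOf_eq, hNS c]
    constructor
    · rintro ⟨hcR, hcW, hodd⟩
      have hcv : c ≠ v := fun h => hvR (h ▸ hcR)
      exact ⟨hcR, (keyW c hcv).mp hcW, hodd⟩
    · rintro ⟨hcR, hcW, hodd⟩
      exact ⟨hcR, hW'W hcW, hodd⟩
  have keyBag : ∀ S : Set V, v ∉ S → S ∩ (B t ∩ TG.L) = S ∩ (B t' ∩ TG.L) := by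
    intro S hvS
    rw [hBt]
    ext x
    simp only [Set.mem_inter_iff, Set.mem_union, Set.mem_singleton_iff]
    constructor
    · rintro ⟨hxS, hx1 | hx1, hxL⟩
      · exact ⟨hxS, hx1, hxL⟩
      · exact absurd (hx1 ▸ hxS) hvS
    · rintro ⟨hxS, hx1, hxL⟩
      exact ⟨hxS, Or.inl hx1, hxL⟩
  constructor
  · rintro ⟨hne, hsub, hQeq, hG⟩
    have hvS : v ∉ S := by
      intro hvS
      exact hvQ (hQeq ▸ ⟨hvS, hvBt, hvL⟩)
    refine ⟨hne, ?_, by rw [← keyBag S hvS, hQeq], by rw [← keyGamma S hvS, hG]⟩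
    intro x hx
    have h1 := hsub hx
    have hxv : x ≠ v := fun h => hvS (h ▸ hx)
    exact ⟨(keyW x hxv).mp h1.1, h1.2⟩
  · rintro ⟨hne, hsub, hQeq, hG⟩
    have hvS : v ∉ S := fun h => hvW' (hsub h).1
    exact ⟨hne, fun x hx => ⟨hW'W (hsub hx).1, (hsub hx).2⟩,
      by rw [keyBag S hvS, hQeq], by rw [keyGamma S hvS, hG]⟩
end

section
/- Let G be a Tanner graph with a rooted tree decomposition, and let t be a forget node with single child t' forgetting a check node c, i.e. B_t = B_{t'} \ {c} with c ∈ B_{t'} ∩ R. Then for every I ⊆ B_t^c, Q ⊆ B_t^v, and integer d ≥ 0, a set S is a trapping set with extended parameters (I,Q,d) in G_t if and only if either S is a trapping set with extended parameters (I,Q,d) in G_{t'}, or d ≥ 1 and S is a trapping set with extended parameters (I ∪ {c}, Q, d−1) in G_{t'}; moreover these two alternatives are mutually exclusive. -/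
/-!
Since `t'` is the only child of `t` and `B t ⊆ B t'`, the subtrees below `t` and `t'` carry the
same vertices, so `G_t = G_{t'}` and `S` has the same odd checks `Γ_o` in both. Forgetting the
check node `c` only changes how `Γ_o` is split: if `c` is an odd check of `S`, it leaves the
bag part `I ∪ {c}` and is counted in `d` instead; otherwise nothing changes. The two cases are
told apart by whether `c ∈ Γ_o`, hence exclusive.
-/

namespace Desc

variable {ι : Type*} {T : SimpleGraph ι} {root t s i : ι}

lemma exists_isChildOf_s15 (h : Desc T root t i) (hti : t ≠ i) :
    ∃ s, IsChildOf T root s t ∧ Desc T root s i := by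
  obtain ⟨p, hp, ht⟩ := h
  obtain ⟨n, rfl, hn⟩ := SimpleGraph.Walk.mem_support_iff_exists_getVert.mp ht
  have hlt : n < p.length := by
    refine lt_of_le_of_ne hn fun hlen => hti ?_
    rw [hlen, SimpleGraph.Walk.getVert_length]
  refine ⟨p.getVert (n + 1), ⟨p.adj_getVert_succ hlt, p.take (n + 1), hp.take _, ?_⟩,
    p, hp, p.getVert_mem_support _⟩
  simpa using (p.take (n + 1)).getVert_mem_support n

lemma trans_s15 (hT : T.IsTree) (hts : Desc T root t s) (hsi : Desc T root s i) :
    Desc T root t i := by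
  classical
  obtain ⟨q, hq, htq⟩ := hts
  obtain ⟨p, hp, hsp⟩ := hsi
  have hqp : q = p.takeUntil s hsp := hT.existsUnique_path root s |>.unique hq (hp.takeUntil hsp)
  exact ⟨p, hp, p.support_takeUntil_subset_support hsp (hqp ▸ htq)⟩

end Desc

lemma subVerts_eq_of_unique_child {V ι : Type*} {T : SimpleGraph ι} (hT : T.IsTree) {root : ι}
    {B : ι → Set V} {t t' : ι} (hchild : IsChildOf T root t' t)
    (honly : ∀ s, IsChildOf T root s t → s = t') (hB : B t ⊆ B t') :
    subVerts T root B t = subVerts T root B t' := by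
  ext v
  constructor
  · rintro ⟨i, hi, hv⟩
    obtain rfl | hti := eq_or_ne t i
    · obtain ⟨p, hp, -⟩ := hchild.2
      exact ⟨t', ⟨p, hp, p.end_mem_support⟩, hB hv⟩
    · obtain ⟨s, hs, hsi⟩ := hi.exists_isChildOf_s15 hti
      exact ⟨i, honly s hs ▸ hsi, hv⟩
  · rintro ⟨i, hi, hv⟩
    exact ⟨i, hchild.2.trans_s15 hT hi, hv⟩

lemma Set.inter_sdiff_singleton_eq_and_ncard_iff {α : Type*} {A K I : Set α} {c : α} {d : ℕ}
    -- `hfin` matters: `ncard` of an infinite set is `0`.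
    (hfin : (A \ K).Finite) (hcK : c ∈ K) (hcI : c ∉ I) :
    (A ∩ (K \ {c}) = I ∧ (A \ (K \ {c})).ncard = d) ↔
      (A ∩ K = I ∧ (A \ K).ncard = d) ∨
        (1 ≤ d ∧ A ∩ K = I ∪ {c} ∧ (A \ K).ncard = d - 1) := by
  rw [← Set.inter_sdiff_assoc, Set.sdiff_sdiff_right]
  by_cases hcA : c ∈ A
  · have hcAK : c ∉ A \ K := fun h => h.2 hcK
    rw [Set.inter_singleton_of_mem hcA, Set.union_singleton,
      Set.ncard_insert_of_notMem hcAK hfin]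
    have hI : (A ∩ K) \ {c} = I ↔ A ∩ K = I ∪ {c} := by
      constructor
      · rintro rfl
        rw [Set.sdiff_union_self, Set.union_singleton, Set.insert_eq_of_mem (Set.mem_inter hcA hcK)]
      · rintro h
        rw [h, Set.union_sdiff_right, Set.sdiff_singleton_eq_self hcI]
    rw [hI]
    constructor
    · rintro ⟨h, rfl⟩
      exact Or.inr ⟨by omega, h, rfl⟩
    · rintro (⟨h, -⟩ | ⟨hd, h, hn⟩)
      · exact absurd (h ▸ ⟨hcA, hcK⟩) hcI
      · exact ⟨h, by omega⟩
  · rw [Set.inter_singleton_eq_empty.mpr hcA, Set.union_empty,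
      Set.sdiff_singleton_eq_self fun h => hcA h.1]
    refine ⟨Or.inl, ?_⟩
    rintro (h | ⟨-, h, -⟩)
    · exact h
    · exact absurd (h ▸ Or.inr rfl : c ∈ A ∩ K).1 hcA

section ForgetCheck

variable {V : Type*} (TG : TannerGraph V) {W K S I Q : Set V} {c : V}

lemma TannerGraph.sdiff_singleton_inter_L (hc : c ∈ TG.R) (K : Set V) :
    (K \ {c}) ∩ TG.L = K ∩ TG.L := by
  rw [Set.sdiff_inter_right_comm,
    Set.sdiff_singleton_eq_self fun h => TG.disj.notMem_of_mem_right hc h.2]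

lemma hasExtParams_sdiff_singleton_iff [Finite V] (hc : c ∈ K ∩ TG.R) (hcI : c ∉ I) (d : ℕ) :
    HasExtParams TG W (K \ {c}) S I Q d ↔
      HasExtParams TG W K S I Q d ∨ (1 ≤ d ∧ HasExtParams TG W K S (I ∪ {c}) Q (d - 1)) := by
  have hR : (K \ {c}) ∩ TG.R = (K ∩ TG.R) \ {c} := Set.sdiff_inter_right_comm ..
  simp only [HasExtParams, TG.sdiff_singleton_inter_L hc.2, hR,
    Set.inter_sdiff_singleton_eq_and_ncard_iff (Set.toFinite _) hc hcI]
  tauto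

lemma not_hasExtParams_and_hasExtParams_union_singleton (hcI : c ∉ I) (d d' : ℕ) :
    ¬ (HasExtParams TG W K S I Q d ∧ HasExtParams TG W K S (I ∪ {c}) Q d') := by
  rintro ⟨⟨-, -, -, hI, -⟩, ⟨-, -, -, hIc, -⟩⟩
  exact hcI (hI ▸ hIc ▸ Or.inr rfl)

end ForgetCheck

theorem stmt_15_general {V ι : Type*} [Fintype V]
    (TG : TannerGraph V) (T : SimpleGraph ι) (root : ι) (B : ι → Set V)
    (hD : IsRootedTreeDecomp TG.G T root B)
    (t t' : ι) (hchild : IsChildOf T root t' t)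
    (honly : ∀ s, IsChildOf T root s t → s = t')
    (c : V) (hc : c ∈ B t' ∩ TG.R) (hBt : B t = B t' \ {c})
    (I Q : Set V) (hI : I ⊆ B t ∩ TG.R) (d : ℕ)
    (S : Set V) :
    (HasExtParams TG (subVerts T root B t) (B t) S I Q d ↔
      (HasExtParams TG (subVerts T root B t') (B t') S I Q d ∨
       (1 ≤ d ∧
        HasExtParams TG (subVerts T root B t') (B t') S (I ∪ {c}) Q (d - 1)))) ∧
    ¬ (HasExtParams TG (subVerts T root B t') (B t') S I Q d ∧
       (1 ≤ d ∧
        HasExtParams TG (subVerts T root B t') (B t') S (I ∪ {c}) Q (d - 1))) := by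
  have hcI : c ∉ I := fun h => (hBt ▸ (hI h).1).2 rfl
  have hW : subVerts T root B t = subVerts T root B t' :=
    subVerts_eq_of_unique_child hD.isTree hchild honly (hBt ▸ Set.sdiff_subset)
  rw [hW, hBt]
  refine ⟨hasExtParams_sdiff_singleton_iff TG hc hcI d, ?_⟩
  rintro ⟨h, -, h'⟩
  exact not_hasExtParams_and_hasExtParams_union_singleton TG hcI d (d - 1) ⟨h, h'⟩

/-- forget-check-node rule for extended parameters. -/
theorem stmt_15 {V ι : Type*} [Fintype V] [Fintype ι]
    (TG : TannerGraph V) (T : SimpleGraph ι) (root : ι) (B : ι → Set V)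
    (hD : IsRootedTreeDecomp TG.G T root B)
    (t t' : ι) (hchild : IsChildOf T root t' t)
    (honly : ∀ s, IsChildOf T root s t → s = t')
    (c : V) (hc : c ∈ B t' ∩ TG.R) (hBt : B t = B t' \ {c})
    (I Q : Set V) (hI : I ⊆ B t ∩ TG.R) (hQ : Q ⊆ B t ∩ TG.L) (d : ℕ)
    (S : Set V) :
    (HasExtParams TG (subVerts T root B t) (B t) S I Q d ↔
      (HasExtParams TG (subVerts T root B t') (B t') S I Q d ∨
       (1 ≤ d ∧
        HasExtParams TG (subVerts T root B t') (B t') S (I ∪ {c}) Q (d - 1)))) ∧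
    ¬ (HasExtParams TG (subVerts T root B t') (B t') S I Q d ∧
       (1 ≤ d ∧
        HasExtParams TG (subVerts T root B t') (B t') S (I ∪ {c}) Q (d - 1))) :=
  stmt_15_general TG T root B hD t t' hchild honly c hc hBt I Q hI d S
end
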